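/- arXiv:2602.21191 — 2 statements merged into one kernel-verified Lean document; each statement's English description precedes it below -/
import Mathlib

section
/- For every k ∈ ℕ and ρ ∈ (0,1), the normalized probabilist's Hermite polynomial h_k is an eigenfunction of the Ornstein–Uhlenbeck operator: U_ρ h_k = ρ^k h_k. -/
open MeasureTheory ProbabilityTheory

/-- The Ornstein–Uhlenbeck operator on functions `ℝ → ℝ`. -/
noncomputable def ouOp (ρ : ℝ) (f : ℝ → ℝ) (x : ℝ) : ℝ :=
  ∫ z, f (ρ * x + Real.sqrt (1 - ρ ^ 2) * z) ∂(gaussianReal 0 1)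

/-- The `k`-th normalized probabilist's Hermite polynomial `h_k = He_k / √(k!)`. -/
noncomputable def normalizedHermite (k : ℕ) (t : ℝ) : ℝ :=
  ((Polynomial.hermite k).map (Int.castRingHom ℝ)).eval t / Real.sqrt (Nat.factorial k)

/-!
After the change of variables `y = ρx + √(1 - ρ²) z`, `U_ρ f (x)` is the mean of `f` under
`N(ρx, 1 - ρ²)`. For `Y ∼ N(μ, v)` and a polynomial `p`, Stein's identity gives
`E[Y p(Y)] = μ E[p(Y)] + v E[p'(Y)]`. Feeding the recurrences `He_{k+2} = X He_{k+1} - (k+1) He_k`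
and `He_{k+1}' = (k+1) He_k` into it with `μ = ρx`, `v = 1 - ρ²` yields
`E[He_{k+2}(Y)] = ρx E[He_{k+1}(Y)] - ρ²(k+1) E[He_k(Y)]`, which is the Hermite recurrence
scaled by `ρ^{k+2}` once `E[He_j(Y)] = ρ^j He_j(x)` is known for `j = k, k+1`.
-/

open Polynomial
open scoped NNReal

namespace Polynomial

lemma derivative_hermite_succ (n : ℕ) :
    derivative (hermite (n + 1)) = (n + 1 : ℤ[X]) * hermite n := by
  induction n with
  | zero => simp
  | succ n ih =>
    rw [hermite_succ (n + 1), derivative_sub, derivative_mul, derivative_X, ih, derivative_mul,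
      hermite_succ n]
    simp only [derivative_add, derivative_natCast, derivative_one]
    push_cast
    ring

lemma hermite_succ_succ (n : ℕ) :
    hermite (n + 2) = X * hermite (n + 1) - (n + 1 : ℤ[X]) * hermite n := by
  rw [hermite_succ (n + 1), derivative_hermite_succ]

end Polynomial

namespace ProbabilityTheory

variable {μ : ℝ} {v : ℝ≥0}

lemma hasDerivAt_gaussianPDFReal (μ : ℝ) (v : ℝ≥0) (x : ℝ) :
    HasDerivAt (gaussianPDFReal μ v) (-((x - μ) / v) * gaussianPDFReal μ v x) x := by
  have h := ((((hasDerivAt_id' x).sub_const μ).fun_pow 2).fun_neg.div_const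
    (2 * (v : ℝ))).exp.const_mul (√(2 * Real.pi * v))⁻¹
  rw [gaussianPDFReal_def]
  exact h.congr_deriv (by ring)

lemma integrable_gaussianPDFReal_mul (hv : v ≠ 0) {g : ℝ → ℝ}
    (hg : Integrable g (gaussianReal μ v)) :
    Integrable fun x => gaussianPDFReal μ v x * g x := by
  rw [gaussianReal_of_var_ne_zero _ hv, integrable_withDensity_iff_integrable_smul'
    (measurable_gaussianPDF _ _) (ae_of_all _ fun _ => gaussianPDF_lt_top)] at hg
  simpa [gaussianPDF, ENNReal.toReal_ofReal (gaussianPDFReal_nonneg _ _ _)] using hg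

/-- Stein's lemma (Gaussian integration by parts). -/
theorem integral_sub_mul_gaussianReal {f f' : ℝ → ℝ} (hf : ∀ x, HasDerivAt f (f' x) x)
    (hf_int : Integrable f (gaussianReal μ v)) (hf'_int : Integrable f' (gaussianReal μ v))
    (hxf_int : Integrable (fun x => (x - μ) * f x) (gaussianReal μ v)) :
    ∫ x, (x - μ) * f x ∂gaussianReal μ v = v * ∫ x, f' x ∂gaussianReal μ v := by
  rcases eq_or_ne v 0 with rfl | hv
  · simp [gaussianReal_zero_var]
  have ibp := integral_mul_deriv_eq_deriv_mul_of_integrable (fun x _ => hf x)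
    (fun x _ => hasDerivAt_gaussianPDFReal μ v x)
    (((integrable_gaussianPDFReal_mul hv hxf_int).const_mul (-(v : ℝ)⁻¹)).congr
      (ae_of_all _ fun x => by simp only [Pi.mul_apply]; ring))
    (by simpa only [Pi.mul_def, mul_comm] using integrable_gaussianPDFReal_mul hv hf'_int)
    (by simpa only [Pi.mul_def, mul_comm] using integrable_gaussianPDFReal_mul hv hf_int)
  simp only [integral_gaussianReal_eq_integral_smul hv, smul_eq_mul]
  calc ∫ x, gaussianPDFReal μ v x * ((x - μ) * f x)
      = -v * ∫ x, f x * (-((x - μ) / v) * gaussianPDFReal μ v x) := by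
        rw [← integral_const_mul]; congr 1 with x; field_simp
    _ = v * ∫ x, gaussianPDFReal μ v x * f' x := by
        rw [ibp]; simp only [mul_comm (f' _)]; ring

lemma integrable_eval_gaussianReal (p : ℝ[X]) :
    Integrable (fun x => p.eval x) (gaussianReal μ v) := by
  induction p using Polynomial.induction_on' with
  | add p q hp hq => simpa only [eval_add] using hp.fun_add hq
  | monomial n a =>
    simp only [eval_monomial]
    exact (((memLp_id_gaussianReal n).integrable_norm_pow').mono' (by fun_prop)
      (ae_of_all _ fun x => by simp [norm_pow])).const_mul a

lemma integral_mul_eval_gaussianReal (p : ℝ[X]) :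
    ∫ x, x * p.eval x ∂gaussianReal μ v =
      μ * ∫ x, p.eval x ∂gaussianReal μ v + v * ∫ x, (derivative p).eval x ∂gaussianReal μ v := by
  have hxp := integrable_eval_gaussianReal (μ := μ) (v := v) ((X - C μ) * p)
  simp only [eval_mul, eval_sub, eval_X, eval_C] at hxp
  rw [← integral_sub_mul_gaussianReal (fun x => p.hasDerivAt x) (integrable_eval_gaussianReal p)
    (integrable_eval_gaussianReal _) hxp, ← integral_const_mul,
    ← integral_add ((integrable_eval_gaussianReal p).const_mul μ) hxp]
  congr with x
  ring

theorem integral_hermite_gaussianReal {ρ x : ℝ} {v : ℝ≥0} (hv : (v : ℝ) = 1 - ρ ^ 2) (k : ℕ) :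
    ∫ y, ((hermite k).map (Int.castRingHom ℝ)).eval y ∂gaussianReal (ρ * x) v =
      ρ ^ k * ((hermite k).map (Int.castRingHom ℝ)).eval x := by
  induction k using Nat.twoStepInduction with
  | zero => simp
  | one => simp [integral_id_gaussianReal]
  | more k ih₀ ih₁ =>
    have hstein := integral_mul_eval_gaussianReal (μ := ρ * x) (v := v)
      ((hermite (k + 1)).map (Int.castRingHom ℝ))
    have hint₁ := integrable_eval_gaussianReal (μ := ρ * x) (v := v)
      (X * (hermite (k + 1)).map (Int.castRingHom ℝ))
    have hint₀ := integrable_eval_gaussianReal (μ := ρ * x) (v := v)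
      ((k + 1 : ℝ[X]) * (hermite k).map (Int.castRingHom ℝ))
    rw [derivative_map, derivative_hermite_succ] at hstein
    simp only [hermite_succ_succ, Polynomial.map_sub, Polynomial.map_mul, Polynomial.map_add,
      Polynomial.map_natCast, Polynomial.map_one, map_X, eval_sub, eval_mul, eval_X, eval_add,
      eval_natCast, eval_one] at hstein hint₀ hint₁ ⊢
    rw [integral_sub hint₁ hint₀, integral_const_mul, hstein, integral_const_mul, ih₀, ih₁, hv]
    ring

lemma integral_comp_add_sqrt_mul_gaussianReal {f : ℝ → ℝ} (hf : Measurable f) (a : ℝ)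
    (v : ℝ≥0) :
    ∫ z, f (a + √v * z) ∂gaussianReal 0 1 = ∫ y, f y ∂gaussianReal a v := by
  have hmap : (gaussianReal 0 1).map (fun z => a + √v * z) = gaussianReal a v := by
    rw [show (fun z => a + √v * z) = (a + ·) ∘ (√v * ·) from rfl,
      ← Measure.map_map (measurable_const_add a) (measurable_const_mul _),
      gaussianReal_map_const_mul, gaussianReal_map_const_add]
    congr
    · simp
    · ext; simp
  rw [← hmap, integral_map (by fun_prop) hf.aestronglyMeasurable]

end ProbabilityTheory

lemma ouOp_eq_integral_gaussianReal (ρ : ℝ) {f : ℝ → ℝ} (hf : Measurable f) (x : ℝ) :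
    ouOp ρ f x = ∫ y, f y ∂gaussianReal (ρ * x) (1 - ρ ^ 2).toNNReal := by
  rw [ouOp, ← integral_comp_add_sqrt_mul_gaussianReal hf, Real.sqrt, Real.sqrt, Real.toNNReal_coe]

/-- For every `k ∈ ℕ` and `ρ ∈ (0,1)`, the normalized probabilist's Hermite
polynomial `h_k` is an eigenfunction of the Ornstein–Uhlenbeck operator: `U_ρ h_k = ρ^k h_k`. -/
theorem ouOp_normalizedHermite_eigenfunction (k : ℕ) (ρ : ℝ) (hρ : ρ ∈ Set.Ioo (0 : ℝ) 1) :
    ouOp ρ (normalizedHermite k) = fun x => ρ ^ k * normalizedHermite k x := by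
  have hvar : ((1 - ρ ^ 2).toNNReal : ℝ) = 1 - ρ ^ 2 :=
    Real.coe_toNNReal _ (by nlinarith [hρ.1, hρ.2])
  funext x
  rw [ouOp_eq_integral_gaussianReal ρ (by unfold normalizedHermite; fun_prop)]
  simp only [normalizedHermite, integral_div]
  rw [integral_hermite_gaussianReal hvar, mul_div_assoc]
end

section
/- For odd k, the Hermite coefficient of the sign function satisfies E_{G∼N(0,1)}[h_k(G) · sign(G)] ≠ 0; moreover |E[h_k(G) sign(G)]| ≥ c/k^{3/4} for some universal constant c > 0. -/
open MeasureTheory ProbabilityTheory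

/-- The sign function `sign(x)`. -/
noncomputable def signFun (x : ℝ) : ℝ := if x < 0 then -1 else 1

/-!
For odd `k = 2m + 1`, `He_k(x) e^{-x²/2}` is odd and is the derivative of `-He_{2m}(x) e^{-x²/2}`,
so the sign coefficient is `2 He_{2m}(0) / √(2π k!) = (-1)^m 2 (2m-1)‼ / √(2π k!)`. Wallis'
inequality `W m ≤ π/2`, i.e. `(2m)!² ≤ (π/2)(2m+1)((2m-1)‼)⁴`, bounds the fourth power of its
absolute value below by `8 / (π³ k³)`.
-/

open Real Polynomial Set Filter
open scoped Nat

lemma aeval_neg_hermite (n : ℕ) (x : ℝ) :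
    aeval (-x) (hermite n) = (-1) ^ n * aeval x (hermite n) := by
  simp only [aeval_eq_sum_range, natDegree_hermite, Finset.mul_sum]
  refine Finset.sum_congr rfl fun i _ => ?_
  rcases Nat.even_or_odd (n + i) with h | h
  · rw [neg_pow, neg_one_pow_congr (Nat.even_add.mp h).symm, mul_smul_comm]
  · simp [coeff_hermite_of_odd_add h]

lemma hasDerivAt_aeval_hermite_mul_exp (n : ℕ) (x : ℝ) :
    HasDerivAt (fun y => aeval y (hermite n) * exp (-(y ^ 2 / 2)))
      (-(aeval x (hermite (n + 1)) * exp (-(x ^ 2 / 2)))) x := by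
  have hexp : HasDerivAt (fun y : ℝ => exp (-(y ^ 2 / 2))) (-x * exp (-(x ^ 2 / 2))) x := by
    have h : HasDerivAt (fun y : ℝ => -(y ^ 2 / 2)) (-x) x := by
      simpa using ((hasDerivAt_pow 2 x).div_const 2).fun_neg
    simpa [mul_comm] using h.exp
  refine (((hermite n).hasDerivAt_aeval x).mul hexp).congr_deriv ?_
  rw [hermite_succ]
  simp only [map_sub, map_mul, aeval_X]
  ring

lemma integrable_aeval_mul_exp (p : ℤ[X]) :
    Integrable (fun x : ℝ => aeval x p * exp (-(x ^ 2 / 2))) := by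
  induction p using Polynomial.induction_on' with
  | add p q hp hq => simp only [map_add, add_mul]; exact hp.add hq
  | monomial n a =>
    have h := (integrable_rpow_mul_exp_neg_mul_sq (b := 1 / 2) (by norm_num)
      (s := n) (by linarith [n.cast_nonneg (α := ℝ)])).const_mul (a : ℝ)
    convert h using 2 with x
    simp only [aeval_monomial, rpow_natCast, algebraMap_int_eq, eq_intCast]
    ring_nf

lemma tendsto_aeval_mul_exp_atTop (p : ℤ[X]) :
    Tendsto (fun x : ℝ => aeval x p * exp (-(x ^ 2 / 2))) atTop (nhds 0) := by
  have hdiv := (p.map (Int.castRingHom ℝ)).tendsto_div_exp_atTop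
  refine squeeze_zero_norm' ?_ (by simpa using hdiv.norm)
  filter_upwards [eventually_ge_atTop (2 : ℝ)] with x hx
  rw [aeval_def, algebraMap_int_eq, ← eval_map, norm_mul, Real.norm_eq_abs,
    div_eq_mul_inv _ (exp x), norm_of_nonneg (exp_pos _).le, ← exp_neg]
  gcongr
  nlinarith

lemma integral_Ioi_aeval_hermite_succ_mul_exp (n : ℕ) :
    ∫ x in Ioi (0 : ℝ), aeval x (hermite (n + 1)) * exp (-(x ^ 2 / 2))
      = aeval 0 (hermite n) := by
  have h := integral_Ioi_of_hasDerivAt_of_tendsto' (a := 0)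
    (fun x _ => hasDerivAt_aeval_hermite_mul_exp n x)
    (integrable_aeval_mul_exp _).neg.integrableOn (tendsto_aeval_mul_exp_atTop (hermite n))
  simpa [integral_neg] using h

lemma integral_mul_signFun_of_odd {f : ℝ → ℝ} (hf : ∀ x, f (-x) = -f x) :
    ∫ x, f x * signFun x = 2 * ∫ x in Ioi (0 : ℝ), f x := by
  rw [← integral_comp_abs]
  congr 1 with x
  unfold signFun
  split_ifs with hx
  · rw [abs_of_neg hx, hf, mul_neg_one]
  · rw [abs_of_nonneg (not_lt.mp hx), mul_one]

lemma integral_gaussianReal_zero_one (f : ℝ → ℝ) :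
    ∫ x, f x ∂gaussianReal 0 1 = (√(2 * π))⁻¹ * ∫ x, exp (-(x ^ 2 / 2)) * f x := by
  rw [integral_gaussianReal_eq_integral_smul one_ne_zero, ← integral_const_mul]
  congr 1 with x
  simp only [gaussianPDFReal, NNReal.coe_one, mul_one, sub_zero, smul_eq_mul, mul_assoc,
    neg_div]

lemma Nat.factorial_two_mul_eq_mul_doubleFactorial (m : ℕ) :
    (2 * m)! = 2 ^ m * m ! * (2 * m - 1)‼ := by
  cases m with
  | zero => rfl
  | succ n =>
    rw [show 2 * (n + 1) = 2 * n + 1 + 1 by ring, factorial_eq_mul_doubleFactorial,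
      show 2 * n + 1 + 1 = 2 * (n + 1) by ring, doubleFactorial_two_mul,
      show 2 * (n + 1) - 1 = 2 * n + 1 by omega]

lemma sq_factorial_two_mul_le (m : ℕ) :
    ((2 * m)! : ℝ) ^ 2 ≤ π / 2 * (2 * m + 1) * ((2 * m - 1)‼ : ℝ) ^ 4 := by
  have hW := Wallis.W_le m
  rw [Wallis.W_eq_factorial_ratio, div_le_iff₀ (by positivity)] at hW
  have hF : ((2 * m)! : ℝ) = 2 ^ m * m ! * (2 * m - 1)‼ := by
    exact_mod_cast Nat.factorial_two_mul_eq_mul_doubleFactorial m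
  set A : ℝ := 2 ^ m * (m ! : ℝ)
  set d : ℝ := ((2 * m - 1)‼ : ℝ)
  have hA : 0 < A := by positivity
  have h16 : 2 ^ (4 * m) * (m ! : ℝ) ^ 4 = A ^ 2 * A ^ 2 := by ring
  rw [hF, h16] at hW
  rw [hF]
  have hA2 : A ^ 2 ≤ π / 2 * (2 * m + 1) * d ^ 2 :=
    le_of_mul_le_mul_left (by linarith) (pow_pos hA 2)
  nlinarith [sq_nonneg d]

lemma aeval_zero_hermite_two_mul (m : ℕ) :
    aeval (0 : ℝ) (hermite (2 * m)) = (-1) ^ m * ((2 * m - 1)‼ : ℝ) := by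
  rw [← coeff_zero_eq_aeval_zero', ← add_zero (2 * m), coeff_hermite_explicit]
  simp

lemma normalizedHermite_eq (k : ℕ) (x : ℝ) :
    normalizedHermite k x = aeval x (hermite k) / √(k.factorial) := by
  rw [normalizedHermite, eval_map, aeval_def, algebraMap_int_eq]

lemma integral_normalizedHermite_mul_signFun (m : ℕ) :
    ∫ x, normalizedHermite (2 * m + 1) x * signFun x ∂gaussianReal 0 1
      = (-1) ^ m * (2 * (2 * m - 1)‼ / √(2 * π * (2 * m + 1)!)) := by
  have hodd : ∀ x, aeval (-x) (hermite (2 * m + 1)) * exp (-((-x) ^ 2 / 2))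
      = -(aeval x (hermite (2 * m + 1)) * exp (-(x ^ 2 / 2))) := fun x => by
    rw [aeval_neg_hermite, neg_sq, (odd_two_mul_add_one m).neg_one_pow]
    ring
  have hpt : (fun x => exp (-(x ^ 2 / 2)) * (normalizedHermite (2 * m + 1) x * signFun x))
      = fun x => (√((2 * m + 1)! : ℝ))⁻¹ *
        (aeval x (hermite (2 * m + 1)) * exp (-(x ^ 2 / 2)) * signFun x) := by
    funext x
    rw [normalizedHermite_eq]
    ring
  rw [integral_gaussianReal_zero_one, hpt, integral_const_mul, integral_mul_signFun_of_odd hodd,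
    integral_Ioi_aeval_hermite_succ_mul_exp, aeval_zero_hermite_two_mul,
    sqrt_mul (by positivity : 0 ≤ 2 * π)]
  field_simp

lemma half_div_rpow_le_doubleFactorial_div_sqrt (m : ℕ) :
    1 / 2 / ((2 * m + 1 : ℕ) : ℝ) ^ ((3 : ℝ) / 4)
      ≤ 2 * (2 * m - 1)‼ / √(2 * π * (2 * m + 1)!) := by
  have hF := sq_factorial_two_mul_le m
  have hsqrt : √(2 * π * (2 * m + 1)! : ℝ) ^ 4 = (2 * π * (2 * m + 1) * (2 * m)!) ^ 2 := by
    rw [show (4 : ℕ) = 2 * 2 from rfl, pow_mul, sq_sqrt (by positivity), Nat.factorial_succ]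
    push_cast
    ring
  have hrpow : (((2 * m + 1 : ℕ) : ℝ) ^ ((3 : ℝ) / 4)) ^ 4 = (2 * m + 1) ^ 3 := by
    rw [← rpow_natCast, ← rpow_mul (by positivity)]
    norm_num
  rw [← pow_le_pow_iff_left₀ (by positivity) (by positivity) four_ne_zero]
  simp only [div_pow, one_pow]
  rw [hrpow, hsqrt]
  calc 1 / 2 ^ 4 / (2 * m + 1 : ℝ) ^ 3 ≤ 8 / (π ^ 3 * (2 * m + 1) ^ 3) := by
        rw [div_div, div_le_div_iff₀ (by positivity) (by positivity)]
        nlinarith [pow_le_pow_left₀ pi_pos.le pi_le_four 3,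
          pow_pos (by positivity : (0 : ℝ) < 2 * m + 1) 3]
    _ ≤ (2 * (2 * m - 1)‼) ^ 4 / (2 * π * (2 * m + 1) * (2 * m)!) ^ 2 := by
        rw [div_le_div_iff₀ (by positivity) (by positivity)]
        nlinarith [mul_le_mul_of_nonneg_left hF
          (by positivity : (0 : ℝ) ≤ 32 * π ^ 2 * (2 * m + 1) ^ 2)]

/-- For odd `k`, the Hermite coefficient `E_{G∼N(0,1)}[h_k(G)·sign(G)]` is nonzero;
moreover there is a universal constant `c > 0` with `|E[h_k(G) sign(G)]| ≥ c / k^{3/4}`. -/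
theorem hermite_coeff_sign_lower_bound :
    ∃ c : ℝ, 0 < c ∧ ∀ k : ℕ, Odd k →
      (∫ x, normalizedHermite k x * signFun x ∂(gaussianReal 0 1)) ≠ 0 ∧
      c / (k : ℝ) ^ ((3 : ℝ) / 4)
        ≤ |∫ x, normalizedHermite k x * signFun x ∂(gaussianReal 0 1)| := by
  refine ⟨1 / 2, by norm_num, ?_⟩
  rintro k ⟨m, rfl⟩
  have hpos : 0 < 2 * ((2 * m - 1)‼ : ℝ) / √(2 * π * (2 * m + 1)!) := by
    have := Nat.doubleFactorial_pos (2 * m - 1)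
    positivity
  rw [integral_normalizedHermite_mul_signFun, abs_mul, abs_pow, abs_neg, abs_one, one_pow,
    one_mul, abs_of_pos hpos]
  exact ⟨mul_ne_zero (pow_ne_zero _ (by norm_num)) hpos.ne',
    half_div_rpow_le_doubleFactorial_div_sqrt m⟩
end
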